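/- arXiv:1912.01210 — 2 statements merged into one kernel-verified Lean document; each statement's English description precedes it below -/
import Mathlib

section
/- Let D ≥ 1 and ξ, c, a > 0. For every n, consider a D-dimensional hypercubic lattice of N = n^D sites, each hosting a d-dimensional spin, with Hermitian Hamiltonian H and a stationary density matrix ρ (i.e., [ρ, H] = 0) satisfying exponential correlation decay: |tr(ρ L_i L'_{i'}) − tr(ρ L_i) tr(ρ L'_{i'})| ≤ ‖L_i‖ ‖L'_{i'}‖ · c · e^{−|i−i'|/ξ} for all local operators L_i, L'_{i'} at sites i, i'. Let A_i, B_i be local operators supported within distance r₀ = O(1) of site i with ‖A_i‖, ‖B_i‖ ≤ a, and set A = (1/N) Σ_i A_i, B = (1/N) Σ_i B_i. Then there is a constant C depending only on D, ξ, c, a, r₀ such that for all t ∈ ℝ, |tr(ρ A(t) B) − tr(ρ A) tr(ρ B)| ≤ C/N. -/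
open Matrix
open scoped ComplexOrder

/-- ℓ¹ distance between two lattice sites of `{0,…,n-1}^D`. -/
def latticeDist {D n : ℕ} (i j : Fin D → Fin n) : ℕ :=
  ∑ l, ((i l : ℤ) - (j l : ℤ)).natAbs

/-- A matrix on the `N`-fold tensor product `(ℂ^d)^{⊗N}` (indexed by functions
`site → Fin d`) acts trivially outside the set `S` of sites: its entries vanish unless the
two indices agree off `S`, and they only depend on the restrictions of the indices to `S`. -/
def SupportedOn {D n d : ℕ} (S : Set (Fin D → Fin n))
    (M : Matrix ((Fin D → Fin n) → Fin d) ((Fin D → Fin n) → Fin d) ℂ) : Prop :=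
  (∀ x y, M x y ≠ 0 → ∀ i ∉ S, x i = y i) ∧
  (∀ x y x' y', (∀ i ∈ S, x i = x' i) → (∀ i ∈ S, y i = y' i) →
    (∀ i ∉ S, x i = y i) → (∀ i ∉ S, x' i = y' i) → M x y = M x' y')

/-- Operator norm (ℓ²→ℓ² norm) of a matrix. -/
noncomputable def opNorm {ι : Type*} [Fintype ι] [DecidableEq ι] (M : Matrix ι ι ℂ) : ℝ :=
  ‖Matrix.toEuclideanCLM (𝕜 := ℂ) M‖

/-!
After subtracting means, the connected correlator is `tr(ρ δA(t) δB)`. For a state `ρ`,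
`(X, Y) ↦ tr(ρ Xᴴ Y)` is a positive semidefinite sesquilinear form, so Cauchy–Schwarz bounds
`|tr(ρ δA(t) δB)|²` by `tr(ρ δA(t) δA(t)ᴴ) · tr(ρ δBᴴ δB)`, and stationarity removes the time evolution from the first
factor. Both factors are then equal-time covariances of lattice averages,
`N⁻² ∑_{i,j} cov(A_i, A_jᴴ)`, which exponential clustering bounds by
`N⁻¹ a² c (∑_{m ∈ ℤ} e^{-|m|/ξ})^D`.
-/

section Correlator

variable {ι : Type*} [Fintype ι]

def connectedCorr (ρ X Y : Matrix ι ι ℂ) : ℂ :=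
  (ρ * (X * Y)).trace - (ρ * X).trace * (ρ * Y).trace

theorem Matrix.PosSemidef.norm_trace_mul_mul_sq_le {ρ : Matrix ι ι ℂ} (hρ : ρ.PosSemidef)
    (X Y : Matrix ι ι ℂ) :
    ‖(ρ * (X * Y)).trace‖ ^ 2 ≤ ‖(ρ * (X * Xᴴ)).trace‖ * ‖(ρ * (Yᴴ * Y)).trace‖ := by
  let := ρ.toMatrixSeminormedAddCommGroup hρ
  let := ρ.toMatrixInnerProductSpace hρ
  have trace_eq_inner (x y : Matrix ι ι ℂ) : (ρ * (x * y)).trace = inner ℂ xᴴ y := by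
    change _ = (y * ρ * xᴴᴴ).trace
    rw [conjTranspose_conjTranspose, ← Matrix.mul_assoc, trace_mul_cycle]
  rw [trace_eq_inner, trace_eq_inner, trace_eq_inner, conjTranspose_conjTranspose,
    inner_self_eq_norm_sq_to_K, inner_self_eq_norm_sq_to_K]
  simp only [norm_pow, RCLike.norm_ofReal, abs_norm, ← mul_pow]
  exact pow_le_pow_left₀ (norm_nonneg _) (norm_inner_le_norm _ _) 2

theorem Matrix.IsHermitian.star_trace_mul {ρ : Matrix ι ι ℂ} (hρ : ρ.IsHermitian)
    (X : Matrix ι ι ℂ) : star (ρ * X).trace = (ρ * Xᴴ).trace := by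
  rw [← trace_conjTranspose, conjTranspose_mul, hρ.eq, trace_mul_comm]

variable [DecidableEq ι] {ρ : Matrix ι ι ℂ}

theorem connectedCorr_eq_trace_mul_sub_mul_sub (hρ : ρ.trace = 1) (X Y : Matrix ι ι ℂ) :
    connectedCorr ρ X Y =
      (ρ * ((X - (ρ * X).trace • 1) * (Y - (ρ * Y).trace • 1))).trace := by
  simp only [connectedCorr, sub_mul, mul_sub, Matrix.mul_smul, Matrix.smul_mul,
    Matrix.one_mul, trace_sub, trace_smul, smul_smul, smul_eq_mul, hρ, mul_one]
  ring

theorem norm_connectedCorr_sq_le (hρ : ρ.PosSemidef) (hρ₁ : ρ.trace = 1) (X Y : Matrix ι ι ℂ) :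
    ‖connectedCorr ρ X Y‖ ^ 2 ≤ ‖connectedCorr ρ X Xᴴ‖ * ‖connectedCorr ρ Yᴴ Y‖ := by
  have sub_mean_conjTranspose (Z : Matrix ι ι ℂ) :
      (Z - (ρ * Z).trace • 1)ᴴ = Zᴴ - (ρ * Zᴴ).trace • 1 := by
    rw [conjTranspose_sub, conjTranspose_smul, conjTranspose_one, hρ.1.star_trace_mul]
  simpa only [sub_mean_conjTranspose, ← connectedCorr_eq_trace_mul_sub_mul_sub hρ₁] using
    hρ.norm_trace_mul_mul_sq_le (X - (ρ * X).trace • 1) (Y - (ρ * Y).trace • 1)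

variable {U : Matrix ι ι ℂ}

theorem trace_mul_unitary_conj (hU : U ∈ unitary (Matrix ι ι ℂ)) (hρU : Commute ρ U)
    (X : Matrix ι ι ℂ) : (ρ * (U * X * star U)).trace = (ρ * X).trace :=
  calc (ρ * (U * X * star U)).trace = (U * (ρ * X * star U)).trace := by
        simp only [← Matrix.mul_assoc, hρU.eq]
    _ = (ρ * X * (star U * U)).trace := by
        rw [trace_mul_comm, Matrix.mul_assoc]
    _ = (ρ * X).trace := by
        rw [Unitary.star_mul_self_of_mem hU, Matrix.mul_one]

theorem connectedCorr_unitary_conj (hU : U ∈ unitary (Matrix ι ι ℂ)) (hρU : Commute ρ U)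
    (X Y : Matrix ι ι ℂ) :
    connectedCorr ρ (U * X * star U) (U * Y * star U) = connectedCorr ρ X Y := by
  have hmul : U * X * star U * (U * Y * star U) = U * (X * Y) * star U := by
    simp only [Matrix.mul_assoc]
    rw [← Matrix.mul_assoc (star U) U, Unitary.star_mul_self_of_mem hU, Matrix.one_mul]
  simp only [connectedCorr, hmul, trace_mul_unitary_conj hU hρU]

theorem norm_connectedCorr_unitary_conj_le (hρ : ρ.PosSemidef) (hρ₁ : ρ.trace = 1)
    (hU : U ∈ unitary (Matrix ι ι ℂ)) (hρU : Commute ρ U) {X Y : Matrix ι ι ℂ} {ε : ℝ}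
    (hX : ‖connectedCorr ρ X Xᴴ‖ ≤ ε) (hY : ‖connectedCorr ρ Yᴴ Y‖ ≤ ε) :
    ‖connectedCorr ρ (U * X * star U) Y‖ ≤ ε := by
  have hε : 0 ≤ ε := (norm_nonneg _).trans hX
  have hconj : (U * X * star U)ᴴ = U * Xᴴ * star U := by
    simp only [← star_eq_conjTranspose, star_mul, star_star, Matrix.mul_assoc]
  refine (pow_le_pow_iff_left₀ (norm_nonneg _) hε two_ne_zero).1 ?_
  calc ‖connectedCorr ρ (U * X * star U) Y‖ ^ 2
      ≤ ‖connectedCorr ρ (U * X * star U) (U * X * star U)ᴴ‖ * ‖connectedCorr ρ Yᴴ Y‖ :=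
        norm_connectedCorr_sq_le hρ hρ₁ _ _
    _ = ‖connectedCorr ρ X Xᴴ‖ * ‖connectedCorr ρ Yᴴ Y‖ := by
        rw [hconj, connectedCorr_unitary_conj hU hρU]
    _ ≤ ε ^ 2 := by
        rw [sq]
        exact mul_le_mul hX hY (norm_nonneg _) hε

end Correlator

section Heisenberg

variable {ι : Type*} [Fintype ι] [DecidableEq ι] {H : Matrix ι ι ℂ}

theorem Matrix.IsHermitian.star_exp_I_smul (hH : H.IsHermitian) (t : ℝ) :
    star (NormedSpace.exp (((t : ℂ) * Complex.I) • H)) =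
      NormedSpace.exp ((-(t : ℂ) * Complex.I) • H) := by
  rw [star_eq_conjTranspose, ← Matrix.exp_conjTranspose, conjTranspose_smul, hH.eq]
  simp [Complex.conj_ofReal]

theorem Matrix.IsHermitian.exp_I_smul_mem_unitary (hH : H.IsHermitian) (t : ℝ) :
    NormedSpace.exp (((t : ℂ) * Complex.I) • H) ∈ unitary (Matrix ι ι ℂ) := by
  have exp_smul_mul_exp_smul (x y : ℂ) :
      NormedSpace.exp (x • H) * NormedSpace.exp (y • H) = NormedSpace.exp ((x + y) • H) := by
    rw [add_smul, Matrix.exp_add_of_commute _ _ ((Commute.refl H).smul_left x |>.smul_right y)]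
  rw [Unitary.mem_iff, hH.star_exp_I_smul, exp_smul_mul_exp_smul, exp_smul_mul_exp_smul]
  simp

end Heisenberg

section LatticeSums

variable {q : ℝ}

theorem hasSum_pow_natAbs (hq₀ : 0 ≤ q) (hq₁ : q < 1) :
    HasSum (fun m : ℤ ↦ q ^ m.natAbs) ((1 + q) / (1 - q)) := by
  have hgeom := hasSum_geometric_of_lt_one hq₀ hq₁
  have hnonneg : HasSum (fun k : ℕ ↦ q ^ (k : ℤ).natAbs) (1 - q)⁻¹ := by simpa using hgeom
  have hneg : HasSum (fun k : ℕ ↦ q ^ (-((k : ℤ) + 1)).natAbs) (q * (1 - q)⁻¹) := by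
    have hnatAbs (k : ℕ) : (-((k : ℤ) + 1)).natAbs = k + 1 := by omega
    simpa only [hnatAbs, pow_succ'] using hgeom.mul_left q
  have h := HasSum.of_nat_of_neg_add_one (f := fun m : ℤ ↦ q ^ m.natAbs) hnonneg hneg
  rwa [← one_add_mul, ← div_eq_mul_inv] at h

theorem sum_pow_natAbs_sub_le {α : Type*} [Fintype α] {e : α → ℤ} (he : Function.Injective e)
    (hq₀ : 0 ≤ q) (hq₁ : q < 1) (i : ℤ) :
    ∑ x, q ^ (i - e x).natAbs ≤ (1 + q) / (1 - q) := by
  have hshift := (Equiv.subLeft i).hasSum_iff.2 (hasSum_pow_natAbs hq₀ hq₁)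
  calc ∑ x, q ^ (i - e x).natAbs = ∑ m ∈ Finset.univ.image e, q ^ (i - m).natAbs :=
        (Finset.sum_image (f := fun m ↦ q ^ (i - m).natAbs) fun _ _ _ _ h ↦ he h).symm
    _ ≤ (1 + q) / (1 - q) := sum_le_hasSum _ (fun _ _ ↦ by positivity) hshift

theorem sum_pow_latticeDist_le {D n : ℕ} (hq₀ : 0 ≤ q) (hq₁ : q < 1) (i : Fin D → Fin n) :
    ∑ j, q ^ latticeDist i j ≤ ((1 + q) / (1 - q)) ^ D := by
  have hcoord : Function.Injective fun x : Fin n ↦ ((x : ℕ) : ℤ) :=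
    Nat.cast_injective.comp Fin.val_injective
  simp only [latticeDist, ← Finset.prod_pow_eq_pow_sum]
  rw [← Fintype.prod_sum (κ := fun _ ↦ Fin n) (fun l x ↦ q ^ ((i l : ℤ) - (x : ℤ)).natAbs)]
  calc ∏ l, ∑ x : Fin n, q ^ ((i l : ℤ) - (x : ℤ)).natAbs
      ≤ ∏ _l : Fin D, (1 + q) / (1 - q) :=
        Finset.prod_le_prod (fun _ _ ↦ by positivity)
          (fun l _ ↦ sum_pow_natAbs_sub_le hcoord hq₀ hq₁ _)
    _ = ((1 + q) / (1 - q)) ^ D := by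
        rw [Finset.prod_const, Finset.card_univ, Fintype.card_fin]

end LatticeSums

-- `∑_{m ∈ ℤ} e^{-|m|/ξ}`, by `hasSum_pow_natAbs`
noncomputable def expDecaySum (ξ : ℝ) : ℝ :=
  (1 + Real.exp (-1 / ξ)) / (1 - Real.exp (-1 / ξ))

theorem exp_neg_one_div_lt_one {ξ : ℝ} (hξ : 0 < ξ) : Real.exp (-1 / ξ) < 1 :=
  Real.exp_lt_one_iff.2 (by simpa [neg_div] using hξ)

theorem expDecaySum_pos {ξ : ℝ} (hξ : 0 < ξ) : 0 < expDecaySum ξ :=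
  div_pos (by positivity) (sub_pos.2 (exp_neg_one_div_lt_one hξ))

theorem sum_exp_neg_latticeDist_le {D n : ℕ} {ξ : ℝ} (hξ : 0 < ξ) (i : Fin D → Fin n) :
    ∑ j, Real.exp (-(latticeDist i j : ℝ) / ξ) ≤ expDecaySum ξ ^ D := by
  rw [expDecaySum]
  convert sum_pow_latticeDist_le (Real.exp_pos _).le (exp_neg_one_div_lt_one hξ) i using 2 with j
  rw [← Real.exp_nat_mul]
  ring_nf

section Averages

variable {ι κ : Type*} {D n : ℕ}

noncomputable def latticeAverage (L : (Fin D → Fin n) → Matrix ι ι ℂ) : Matrix ι ι ℂ :=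
  ((n : ℂ) ^ D)⁻¹ • ∑ i, L i

theorem latticeAverage_conjTranspose (L : (Fin D → Fin n) → Matrix ι ι ℂ) :
    (latticeAverage L)ᴴ = latticeAverage fun i ↦ (L i)ᴴ := by
  simp [latticeAverage, conjTranspose_sum]

variable [Fintype ι] [Fintype κ]

theorem connectedCorr_smul_sum_smul_sum (ρ : Matrix ι ι ℂ) (μ ν : ℂ) (f g : κ → Matrix ι ι ℂ) :
    connectedCorr ρ (μ • ∑ i, f i) (ν • ∑ j, g j) =
      μ * ν * ∑ i, ∑ j, connectedCorr ρ (f i) (g j) := by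
  have hprod : ρ * ((∑ i, f i) * ∑ j, g j) = ∑ i, ∑ j, ρ * (f i * g j) := by
    simp only [Finset.sum_mul_sum, Matrix.mul_sum]
  simp only [connectedCorr, Matrix.smul_mul, Matrix.mul_smul, trace_smul, smul_eq_mul, hprod,
    trace_sum, Finset.sum_sub_distrib]
  rw [← Finset.sum_mul_sum, Matrix.mul_sum, Matrix.mul_sum, trace_sum, trace_sum]
  ring

theorem norm_connectedCorr_latticeAverage_le (ρ : Matrix ι ι ℂ)
    (f g : (Fin D → Fin n) → Matrix ι ι ℂ) {M ξ : ℝ} (hM : 0 ≤ M) (hξ : 0 < ξ)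
    (hfg : ∀ i j, ‖connectedCorr ρ (f i) (g j)‖ ≤ M * Real.exp (-(latticeDist i j : ℝ) / ξ)) :
    ‖connectedCorr ρ (latticeAverage f) (latticeAverage g)‖ ≤
      M * expDecaySum ξ ^ D / (n : ℝ) ^ D := by
  set N : ℝ := (n : ℝ) ^ D
  have hsum : ∑ i : Fin D → Fin n, ∑ j, ‖connectedCorr ρ (f i) (g j)‖ ≤ N * (M * expDecaySum ξ ^ D) :=
    calc ∑ i : Fin D → Fin n, ∑ j, ‖connectedCorr ρ (f i) (g j)‖
        ≤ ∑ _i : Fin D → Fin n, M * expDecaySum ξ ^ D := Finset.sum_le_sum fun i _ ↦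
          (Finset.sum_le_sum fun j _ ↦ hfg i j).trans <| by
            rw [← Finset.mul_sum]
            exact mul_le_mul_of_nonneg_left (sum_exp_neg_latticeDist_le hξ i) hM
      _ = N * (M * expDecaySum ξ ^ D) := by simp [N]
  rw [latticeAverage, latticeAverage, connectedCorr_smul_sum_smul_sum, norm_mul, norm_mul,
    norm_inv, norm_pow, Complex.norm_natCast]
  calc N⁻¹ * N⁻¹ * ‖∑ i, ∑ j, connectedCorr ρ (f i) (g j)‖
      ≤ N⁻¹ * N⁻¹ * (N * (M * expDecaySum ξ ^ D)) := by
        gcongr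
        exact (norm_sum_le _ _).trans (Finset.sum_le_sum fun i _ ↦ norm_sum_le _ _) |>.trans hsum
    _ = M * expDecaySum ξ ^ D / N := by
        rcases eq_or_ne N 0 with hN | hN
        · simp [hN]
        · field_simp

end Averages

section Lattice

variable {D n d : ℕ}

theorem SupportedOn.conjTranspose {S : Set (Fin D → Fin n)}
    {M : Matrix ((Fin D → Fin n) → Fin d) ((Fin D → Fin n) → Fin d) ℂ} (hM : SupportedOn S M) :
    SupportedOn S Mᴴ := by
  refine ⟨fun x y hxy i hi ↦ (hM.1 y x (fun h ↦ hxy (by simp [h])) i hi).symm,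
    fun x y x' y' hx hy hxy hx'y' ↦ ?_⟩
  simp only [conjTranspose_apply]
  rw [hM.2 y x y' x' hy hx (fun i hi ↦ (hxy i hi).symm) (fun i hi ↦ (hx'y' i hi).symm)]

theorem opNorm_conjTranspose {ι : Type*} [Fintype ι] [DecidableEq ι] (M : Matrix ι ι ℂ) :
    opNorm Mᴴ = opNorm M :=
  Matrix.l2_opNorm_conjTranspose M

def HasExpClustering (ρ : Matrix ((Fin D → Fin n) → Fin d) ((Fin D → Fin n) → Fin d) ℂ)
    (r₀ : ℕ) (c ξ : ℝ) : Prop :=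
  ∀ (i i' : Fin D → Fin n) (L L' : Matrix ((Fin D → Fin n) → Fin d) ((Fin D → Fin n) → Fin d) ℂ),
    SupportedOn {j | latticeDist i j ≤ r₀} L → SupportedOn {j | latticeDist i' j ≤ r₀} L' →
      ‖connectedCorr ρ L L'‖ ≤ opNorm L * opNorm L' * c * Real.exp (-(latticeDist i i' : ℝ) / ξ)

theorem HasExpClustering.norm_connectedCorr_latticeAverage_le
    {ρ : Matrix ((Fin D → Fin n) → Fin d) ((Fin D → Fin n) → Fin d) ℂ} {r₀ : ℕ} {c ξ a : ℝ}
    (hρ : HasExpClustering ρ r₀ c ξ) (hξ : 0 < ξ) (hc : 0 ≤ c) (ha : 0 ≤ a)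
    {L L' : (Fin D → Fin n) → Matrix ((Fin D → Fin n) → Fin d) ((Fin D → Fin n) → Fin d) ℂ}
    (hL : ∀ i, SupportedOn {j | latticeDist i j ≤ r₀} (L i))
    (hL' : ∀ i, SupportedOn {j | latticeDist i j ≤ r₀} (L' i))
    (hLa : ∀ i, opNorm (L i) ≤ a) (hL'a : ∀ i, opNorm (L' i) ≤ a) :
    ‖connectedCorr ρ (latticeAverage L) (latticeAverage L')‖ ≤
      a * a * c * expDecaySum ξ ^ D / (n : ℝ) ^ D := by
  refine _root_.norm_connectedCorr_latticeAverage_le ρ L L' (by positivity) hξ fun i j ↦ ?_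
  refine (hρ i j _ _ (hL i) (hL' j)).trans ?_
  gcongr ?_ * c * _
  exact mul_le_mul (hLa i) (hL'a j) (norm_nonneg _) ha

end Lattice

theorem no_macroscopic_temporal_order_exponential_general
    (D : ℕ) (ξ c a : ℝ) (hξ : 0 < ξ) (hc : 0 < c) (ha : 0 < a) (r₀ : ℕ) :
    ∃ C : ℝ, 0 < C ∧
      ∀ (n d : ℕ), 1 ≤ n → 1 ≤ d →
      ∀ (H ρ : Matrix ((Fin D → Fin n) → Fin d) ((Fin D → Fin n) → Fin d) ℂ),
        H.IsHermitian → ρ.PosSemidef → ρ.trace = 1 → ρ * H = H * ρ →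
      -- exponential decay of spatial correlations in the state ρ
      (∀ (i i' : Fin D → Fin n),
        ∀ L L' : Matrix ((Fin D → Fin n) → Fin d) ((Fin D → Fin n) → Fin d) ℂ,
          SupportedOn {j | latticeDist i j ≤ r₀} L →
          SupportedOn {j | latticeDist i' j ≤ r₀} L' →
          ‖(ρ * (L * L')).trace - (ρ * L).trace * (ρ * L').trace‖ ≤
            opNorm L * opNorm L' * c * Real.exp (-(latticeDist i i' : ℝ) / ξ)) →
      ∀ (A B : (Fin D → Fin n) →
          Matrix ((Fin D → Fin n) → Fin d) ((Fin D → Fin n) → Fin d) ℂ),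
        (∀ i, SupportedOn {j | latticeDist i j ≤ r₀} (A i)) →
        (∀ i, SupportedOn {j | latticeDist i j ≤ r₀} (B i)) →
        (∀ i, opNorm (A i) ≤ a) →
        (∀ i, opNorm (B i) ≤ a) →
      ∀ t : ℝ,
        let Abar := ((n : ℂ) ^ D)⁻¹ • ∑ i, A i
        let Bbar := ((n : ℂ) ^ D)⁻¹ • ∑ i, B i
        let At := NormedSpace.exp (((t : ℂ) * Complex.I) • H) * Abar *
          NormedSpace.exp ((-(t : ℂ) * Complex.I) • H)
        ‖(ρ * At * Bbar).trace - (ρ * Abar).trace * (ρ * Bbar).trace‖ ≤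
          C / (n : ℝ) ^ D := by
  set C := a * a * c * expDecaySum ξ ^ D
  refine ⟨C, by have := expDecaySum_pos hξ; positivity, ?_⟩
  intro n d _ _ H ρ hH hρ hρ₁ hρH hclust A B hA hB hAa hBa t Abar Bbar At
  set U := NormedSpace.exp (((t : ℂ) * Complex.I) • H)
  have hU : U ∈ unitary _ := hH.exp_I_smul_mem_unitary t
  have hρU : Commute ρ U := Commute.exp_right ((show Commute ρ H from hρH).smul_right _)
  have hAt : At = U * Abar * star U := by rw [hH.star_exp_I_smul]
  have hAA : ‖connectedCorr ρ (latticeAverage A) (latticeAverage A)ᴴ‖ ≤ C / (n : ℝ) ^ D := by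
    rw [latticeAverage_conjTranspose]
    exact HasExpClustering.norm_connectedCorr_latticeAverage_le hclust hξ hc.le ha.le hA
      (fun i ↦ (hA i).conjTranspose) hAa fun i ↦ (opNorm_conjTranspose _).trans_le (hAa i)
  have hBB : ‖connectedCorr ρ (latticeAverage B)ᴴ (latticeAverage B)‖ ≤ C / (n : ℝ) ^ D := by
    rw [latticeAverage_conjTranspose]
    exact HasExpClustering.norm_connectedCorr_latticeAverage_le hclust hξ hc.le ha.le
      (fun i ↦ (hB i).conjTranspose) hB (fun i ↦ (opNorm_conjTranspose _).trans_le (hBa i)) hBa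
  rw [Matrix.mul_assoc, hAt, ← trace_mul_unitary_conj hU hρU Abar]
  exact norm_connectedCorr_unitary_conj_le hρ hρ₁ hU hρU hAA hBB

/-- For a stationary state `ρ` with exponential correlation decay
(correlation length `ξ`, constant `c`), the connected temporal correlator of the macroscopic
operators `A = (1/N) Σ_i A_i`, `B = (1/N) Σ_i B_i` is at most `C/N` at all times `t`, where
`C` depends only on `D, ξ, c, a, r₀`. -/
theorem no_macroscopic_temporal_order_exponential
    (D : ℕ) (hD : 1 ≤ D) (ξ c a : ℝ) (hξ : 0 < ξ) (hc : 0 < c) (ha : 0 < a) (r₀ : ℕ) :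
    ∃ C : ℝ, 0 < C ∧
      ∀ (n d : ℕ), 1 ≤ n → 1 ≤ d →
      ∀ (H ρ : Matrix ((Fin D → Fin n) → Fin d) ((Fin D → Fin n) → Fin d) ℂ),
        H.IsHermitian → ρ.PosSemidef → ρ.trace = 1 → ρ * H = H * ρ →
      -- exponential decay of spatial correlations in the state ρ
      (∀ (i i' : Fin D → Fin n),
        ∀ L L' : Matrix ((Fin D → Fin n) → Fin d) ((Fin D → Fin n) → Fin d) ℂ,
          SupportedOn {j | latticeDist i j ≤ r₀} L →
          SupportedOn {j | latticeDist i' j ≤ r₀} L' →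
          ‖(ρ * (L * L')).trace - (ρ * L).trace * (ρ * L').trace‖ ≤
            opNorm L * opNorm L' * c * Real.exp (-(latticeDist i i' : ℝ) / ξ)) →
      ∀ (A B : (Fin D → Fin n) →
          Matrix ((Fin D → Fin n) → Fin d) ((Fin D → Fin n) → Fin d) ℂ),
        (∀ i, SupportedOn {j | latticeDist i j ≤ r₀} (A i)) →
        (∀ i, SupportedOn {j | latticeDist i j ≤ r₀} (B i)) →
        (∀ i, opNorm (A i) ≤ a) →
        (∀ i, opNorm (B i) ≤ a) →
      ∀ t : ℝ,
        let Abar := ((n : ℂ) ^ D)⁻¹ • ∑ i, A i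
        let Bbar := ((n : ℂ) ^ D)⁻¹ • ∑ i, B i
        let At := NormedSpace.exp (((t : ℂ) * Complex.I) • H) * Abar *
          NormedSpace.exp ((-(t : ℂ) * Complex.I) • H)
        ‖(ρ * At * Bbar).trace - (ρ * Abar).trace * (ρ * Bbar).trace‖ ≤
          C / (n : ℝ) ^ D :=
  no_macroscopic_temporal_order_exponential_general D ξ c a hξ hc ha r₀
end

section
/- Let σ be a traceless Hermitian d×d matrix with σ ≠ 0, and for each of N spins let σ_i denote σ acting on the i-th tensor factor of (ℂ^d)^{⊗N}. Let H = Σ_{i=1}^N σ_i, let A = B = H/N, and let ρ = I / tr(I) = I / d^N be the infinite-temperature state. Then for every t ∈ ℝ, tr(ρ A(t) B) = tr(H²)/(N² d^N) = tr(σ²)/(d N). In particular, since tr(ρ A) = tr(ρ B) = 0, the connected temporal correlator tr(ρ A(t) B) − tr(ρ A) tr(ρ B) equals the positive constant tr(σ²)/(dN) = Θ(1/N) at all times, so the O(1/N) bound of the main theorem (the case α > D) is tight. -/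
/-!
Since `A = H/N` commutes with `H`, `A(t) = A`, and the correlator is `tr(H²)/(N² d^N)`.
The operator `σ_i` is the Kronecker product of the family `Pi.mulSingle i σ`, so traces of
products of site operators factor over the sites: `tr(σ_i σ_j)` has the factor `tr σ = 0` when
`i ≠ j`, while `tr(σ_i²) = tr(σ²) d^(N-1)`. Finally `tr(σ²) = tr(σᴴσ)` is the squared Frobenius
norm of `σ ≠ 0`.
-/

open Matrix

/-- The single-site operator `σ` acting on the `i`-th tensor factor of `(ℂ^d)^{⊗N}`:
`σ_i = I^{⊗(i-1)} ⊗ σ ⊗ I^{⊗(N-i)}`. -/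
def siteOp {N d : ℕ} (i : Fin N) (σ : Matrix (Fin d) (Fin d) ℂ) :
    Matrix (Fin N → Fin d) (Fin N → Fin d) ℂ :=
  fun x y => ∏ j, if j = i then σ (x j) (y j) else (if x j = y j then (1 : ℂ) else 0)

open scoped ComplexOrder

namespace Matrix

section piKronecker

variable {ι R : Type*} [Fintype ι] {n : ι → Type*} [CommSemiring R]

def piKronecker (A : ∀ i, Matrix (n i) (n i) R) : Matrix (∀ i, n i) (∀ i, n i) R :=
  fun x y => ∏ i, A i (x i) (y i)

variable [DecidableEq ι] [∀ i, Fintype (n i)]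

theorem piKronecker_mul_piKronecker (A B : ∀ i, Matrix (n i) (n i) R) :
    piKronecker A * piKronecker B = piKronecker (A * B) := by
  ext x z
  simp only [piKronecker, mul_apply, ← Finset.prod_mul_distrib, Pi.mul_apply]
  exact (Fintype.prod_sum fun i b => A i (x i) b * B i b (z i)).symm

theorem trace_piKronecker (A : ∀ i, Matrix (n i) (n i) R) :
    (piKronecker A).trace = ∏ i, (A i).trace :=
  (Fintype.prod_sum fun i a => A i a a).symm

end piKronecker

theorem IsHermitian.re_trace_mul_self_pos {n : Type*} [Fintype n] {σ : Matrix n n ℂ}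
    (hσ : σ.IsHermitian) (hσne : σ ≠ 0) : 0 < (σ * σ).trace.re := by
  have hpos : 0 < (σᴴ * σ).trace :=
    (posSemidef_conjTranspose_mul_self σ).trace_nonneg.lt_of_ne'
      (trace_conjTranspose_mul_self_eq_zero_iff.not.mpr hσne)
  rw [hσ.eq] at hpos
  exact (Complex.pos_iff.mp hpos).1

theorem exp_smul_mul_mul_exp_neg_smul {m 𝕂 : Type*} [Fintype m] [DecidableEq m] [RCLike 𝕂]
    {A H : Matrix m m 𝕂} (hAH : Commute A H) (c : 𝕂) :
    NormedSpace.exp (c • H) * A * NormedSpace.exp (-c • H) = A := by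
  rw [(hAH.symm.smul_left c).exp_left.eq, mul_assoc, ← exp_add_of_commute _ _
    (((Commute.refl H).smul_left c).smul_right _), ← add_smul, add_neg_cancel, zero_smul,
    NormedSpace.exp_zero, mul_one]

end Matrix

section siteOp

variable {N d : ℕ}

theorem siteOp_eq_piKronecker (i : Fin N) (σ : Matrix (Fin d) (Fin d) ℂ) :
    siteOp i σ = piKronecker (Pi.mulSingle i σ) := by
  ext x y
  refine Finset.prod_congr rfl fun j _ => ?_
  by_cases h : j = i
  · subst h; simp
  · simp [h, one_apply]

theorem siteOp_mul_siteOp_self (i : Fin N) (σ τ : Matrix (Fin d) (Fin d) ℂ) :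
    siteOp i σ * siteOp i τ = siteOp i (σ * τ) := by
  rw [siteOp_eq_piKronecker, siteOp_eq_piKronecker, siteOp_eq_piKronecker,
    piKronecker_mul_piKronecker, Pi.mulSingle_mul]

theorem trace_siteOp (i : Fin N) (σ : Matrix (Fin d) (Fin d) ℂ) :
    (siteOp i σ).trace = σ.trace * (d : ℂ) ^ (N - 1) := by
  rw [siteOp_eq_piKronecker, trace_piKronecker, Fintype.prod_eq_mul_prod_compl i]
  have hrest : ∀ j ∈ ({i}ᶜ : Finset (Fin N)),
      (Pi.mulSingle (M := fun _ => Matrix (Fin d) (Fin d) ℂ) i σ j).trace = d := fun j hj => by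
    rw [Pi.mulSingle_eq_of_ne (by simpa using hj), trace_one, Fintype.card_fin]
  rw [Finset.prod_congr rfl hrest, Finset.prod_const, Finset.card_compl, Finset.card_singleton,
    Fintype.card_fin, Pi.mulSingle_eq_same]

theorem trace_siteOp_mul_siteOp_of_ne {i j : Fin N} (hij : i ≠ j)
    {σ : Matrix (Fin d) (Fin d) ℂ} (hσ : σ.trace = 0) (τ : Matrix (Fin d) (Fin d) ℂ) :
    (siteOp i σ * siteOp j τ).trace = 0 := by
  rw [siteOp_eq_piKronecker, siteOp_eq_piKronecker, piKronecker_mul_piKronecker,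
    trace_piKronecker]
  exact Finset.prod_eq_zero (Finset.mem_univ i) (by simp [Pi.mulSingle_eq_of_ne hij, hσ])

theorem trace_sum_siteOp (σ : Matrix (Fin d) (Fin d) ℂ) :
    (∑ i : Fin N, siteOp i σ).trace = N * (σ.trace * (d : ℂ) ^ (N - 1)) := by
  simp [trace_sum, trace_siteOp]

theorem trace_sum_siteOp_mul_self {σ : Matrix (Fin d) (Fin d) ℂ} (hσ : σ.trace = 0) :
    ((∑ i : Fin N, siteOp i σ) * ∑ i, siteOp i σ).trace =
      N * ((σ * σ).trace * (d : ℂ) ^ (N - 1)) := by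
  rw [Finset.sum_mul_sum, trace_sum, ← trace_sum_siteOp, trace_sum]
  refine Finset.sum_congr rfl fun i _ => ?_
  rw [trace_sum, Finset.sum_eq_single i
    (fun j _ hji => trace_siteOp_mul_siteOp_of_ne hji.symm hσ σ) (by simp),
    siteOp_mul_siteOp_self]

end siteOp

/-- Tightness of the `O(1/N)` bound: for a traceless Hermitian `σ ≠ 0`,
`H = Σ_i σ_i`, `A = B = H/N`, and the infinite-temperature state `ρ = I/d^N`, the connected
temporal correlator satisfies `tr(ρ A(t) B) = tr(H²)/(N² d^N) = tr(σ²)/(d N)` for all `t`,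
`tr(ρ A) = 0`, and `tr(σ²) > 0`, so the correlator is a positive constant `Θ(1/N)`. -/
theorem infinite_temperature_correlator_tight
    (N d : ℕ) (hN : 1 ≤ N) (hd : 1 ≤ d)
    (σ : Matrix (Fin d) (Fin d) ℂ) (hσherm : σ.IsHermitian) (hσtr : σ.trace = 0)
    (hσne : σ ≠ 0) :
    let H : Matrix (Fin N → Fin d) (Fin N → Fin d) ℂ := ∑ i, siteOp i σ
    let A := ((N : ℂ))⁻¹ • H
    let ρ : Matrix (Fin N → Fin d) (Fin N → Fin d) ℂ := ((d : ℂ) ^ N)⁻¹ • 1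
    (∀ t : ℝ,
      let At := NormedSpace.exp (((t : ℂ) * Complex.I) • H) * A *
        NormedSpace.exp ((-(t : ℂ) * Complex.I) • H)
      (ρ * At * A).trace = (H * H).trace / ((N : ℂ) ^ 2 * (d : ℂ) ^ N) ∧
      (ρ * At * A).trace = (σ * σ).trace / ((d : ℂ) * (N : ℂ))) ∧
    (ρ * A).trace = 0 ∧
    0 < ((σ * σ).trace).re := by
  intro H A ρ
  have trace_ρ_mul (M : Matrix (Fin N → Fin d) (Fin N → Fin d) ℂ) :
      (ρ * M).trace = M.trace / (d : ℂ) ^ N := by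
    simp [ρ, trace_smul, div_eq_inv_mul]
  have trace_ρ_mul_A_mul_A :
      (ρ * A * A).trace = (H * H).trace / ((N : ℂ) ^ 2 * (d : ℂ) ^ N) := by
    rw [mul_assoc, trace_ρ_mul, smul_mul_smul, trace_smul, smul_eq_mul]
    field_simp
  refine ⟨fun t => ?_, ?_, hσherm.re_trace_mul_self_pos hσne⟩
  · intro At
    have hAt : At = A := by
      simp only [At, neg_mul]
      exact exp_smul_mul_mul_exp_neg_smul ((Commute.refl H).smul_left _) _
    rw [hAt, trace_ρ_mul_A_mul_A, trace_sum_siteOp_mul_self hσtr]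
    refine ⟨rfl, ?_⟩
    have hd0 : (d : ℂ) ≠ 0 := by exact_mod_cast (by omega : d ≠ 0)
    have hpow : (d : ℂ) ^ N = d ^ (N - 1) * d := by rw [← pow_succ, Nat.sub_add_cancel hN]
    rw [hpow]
    field_simp
  · rw [trace_ρ_mul, trace_smul, trace_sum_siteOp, hσtr]
    simp
end
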